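/- arXiv:1905.08565 — 6 statements merged into one kernel-verified Lean document; each statement's English description precedes it below -/
import Mathlib

section
/- Every finite tree on n vertices has a vertex v (a centroid) such that every connected component of the graph obtained by deleting v has at most n/2 vertices (i.e., twice its number of vertices is at most n). -/
/-!
Call the component of `T - v` containing `x` the branch `B(v, x)`. If no vertex were a centroid,
pick `(v, x)` with `2 |B(v, x)| > n` and `|B(v, x)|` minimal, and let `w` be the neighbour of `v`
in `B = B(v, x)`. Removing the edge `vw` splits the tree into `B` and its complement, so each branch
at `w` is either the complement of `B`, of size `n - |B| < |B|`, or lies in `B \ {w}`. Some branch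
at `w` is too large as well, contradicting minimality.
-/

namespace SimpleGraph

variable {V : Type*} {G : SimpleGraph V}

/-- For `x ≠ v`, the vertex set of the connected component of `G - v` containing `x`;
empty for `x = v`. -/
def branch (G : SimpleGraph V) (v x : V) : Set V :=
  {y | ∃ p : G.Walk x y, v ∉ p.support}

lemma ne_of_mem_branch {v x y : V} (h : y ∈ G.branch v x) : y ≠ v := by
  obtain ⟨p, hp⟩ := h
  rintro rfl
  exact hp p.end_mem_support

lemma mem_branch_symm {v x y : V} (h : y ∈ G.branch v x) : x ∈ G.branch v y := by
  obtain ⟨p, hp⟩ := h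
  exact ⟨p.reverse, by simpa using hp⟩

lemma mem_branch_trans {v x y z : V} (hy : y ∈ G.branch v x) (hz : z ∈ G.branch v y) :
    z ∈ G.branch v x := by
  obtain ⟨p, hp⟩ := hy
  obtain ⟨q, hq⟩ := hz
  exact ⟨p.append q, by simp [Walk.mem_support_append_iff, hp, hq]⟩

lemma branch_eq_of_mem {v x y : V} (h : y ∈ G.branch v x) : G.branch v y = G.branch v x :=
  Set.ext fun _ => ⟨mem_branch_trans h, mem_branch_trans (mem_branch_symm h)⟩

lemma IsTree.compl_branch (hG : G.IsTree) {v w : V} (hvw : G.Adj v w) :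
    (G.branch v w)ᶜ = G.branch w v := by
  classical
  ext x
  obtain ⟨p, hp, -⟩ := hG.existsUnique_path x v
  obtain ⟨q, hq, -⟩ := hG.existsUnique_path x w
  constructor
  · intro hx
    have hvq : v ∈ q.support := by
      by_contra h
      exact hx (mem_branch_symm ⟨q, h⟩)
    exact mem_branch_symm
      ⟨p, hG.isAcyclic.ne_mem_support_of_support_of_adj_of_isPath hq hp hvw.symm hvq⟩
  · intro hxv hxw
    obtain ⟨p', hp'⟩ := mem_branch_symm hxv
    obtain ⟨q', hq'⟩ := mem_branch_symm hxw
    have hwp' := hG.isAcyclic.mem_support_of_ne_mem_support_of_adj_of_isPath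
      p'.bypass_isPath q'.bypass_isPath hvw (fun h => hq' (q'.support_bypass_subset_support h))
    exact hp' (p'.support_bypass_subset_support hwp')

lemma IsTree.branch_eq_or_subset (hG : G.IsTree) {v w : V} (hvw : G.Adj v w) (s : V) :
    G.branch w s = G.branch w v ∨ G.branch w s ⊆ G.branch v w \ {w} := by
  by_cases hs : s ∈ G.branch w v
  · exact Or.inl (branch_eq_of_mem hs)
  · refine Or.inr fun y hy => ⟨?_, ne_of_mem_branch hy⟩
    have hy' : y ∉ G.branch w v := fun h => hs (mem_branch_trans h (mem_branch_symm hy))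
    rwa [← hG.compl_branch hvw, Set.notMem_compl_iff] at hy'

lemma Connected.exists_adj_mem_branch (hG : G.Connected) {v x : V} (hx : x ≠ v) :
    ∃ w, G.Adj v w ∧ w ∈ G.branch v x := by
  obtain ⟨p, hp⟩ := (hG v x).exists_isPath
  obtain ⟨w, hvw, q, rfl⟩ := Walk.exists_eq_cons_of_ne hx.symm p
  exact ⟨w, hvw, mem_branch_symm ⟨q, ((Walk.cons_isPath_iff _ _).1 hp).2⟩⟩

lemma IsTree.exists_forall_ncard_branch_lt [Finite V] (hG : G.IsTree) {v x : V}
    (hx : Nat.card V < 2 * (G.branch v x).ncard) :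
    ∃ w, ∀ s, (G.branch w s).ncard < (G.branch v x).ncard := by
  set B := G.branch v x
  obtain ⟨y, hy⟩ : B.Nonempty := Set.nonempty_of_ncard_ne_zero (by omega)
  obtain ⟨w, hvw, hwB⟩ :=
    hG.connected.exists_adj_mem_branch (ne_of_mem_branch (mem_branch_symm hy))
  have hB : G.branch v w = B := branch_eq_of_mem hwB
  refine ⟨w, fun s => ?_⟩
  rcases hG.branch_eq_or_subset hvw s with h | h
  · have := Set.ncard_add_ncard_compl B
    rw [h, ← hG.compl_branch hvw, hB]
    omega
  · calc (G.branch w s).ncard ≤ (B \ {w}).ncard := Set.ncard_le_ncard (hB ▸ h)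
      _ < B.ncard := Set.ncard_sdiff_singleton_lt_of_mem hwB

theorem IsTree.exists_forall_two_mul_ncard_branch_le [Finite V] (hG : G.IsTree) :
    ∃ v, ∀ x, 2 * (G.branch v x).ncard ≤ Nat.card V := by
  by_contra! h
  obtain ⟨v₀⟩ := hG.connected.nonempty
  obtain ⟨x₀, hx₀⟩ := h v₀
  obtain ⟨⟨v, x⟩, hvx, hmin⟩ := (measure fun p : V × V => (G.branch p.1 p.2).ncard).wf.has_min
    {p | Nat.card V < 2 * (G.branch p.1 p.2).ncard} ⟨(v₀, x₀), hx₀⟩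
  obtain ⟨w, hw⟩ := hG.exists_forall_ncard_branch_lt hvx
  obtain ⟨s, hs⟩ := h w
  exact hmin (w, s) hs (hw s)

lemma image_val_supp_connectedComponentMk_induce_ne {v : V} (x : {u : V | u ≠ v}) :
    Subtype.val '' ((G.induce {u | u ≠ v}).connectedComponentMk x).supp = G.branch v x := by
  ext y
  constructor
  · rintro ⟨y, hy, rfl⟩
    rw [ConnectedComponent.mem_supp_iff, ConnectedComponent.eq] at hy
    obtain ⟨p⟩ := hy.symm
    refine ⟨p.map (Embedding.induce _).toHom, fun hv => ?_⟩
    obtain ⟨z, -, hz⟩ := List.mem_map.1 (p.support_map _ ▸ hv)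
    exact z.2 hz
  · rintro ⟨p, hp⟩
    have hps : ∀ z ∈ p.support, z ∈ {u | u ≠ v} := fun z hz h => hp (h ▸ hz)
    exact ⟨_, ConnectedComponent.eq.2 (p.induce _ hps).reachable.symm, rfl⟩

end SimpleGraph

/-- **Centroid existence.** Every finite tree on `n` vertices has a vertex `v` such that
every connected component of the graph obtained by deleting `v` (the induced subgraph on
the remaining vertices) has at most `n / 2` vertices, i.e. twice its size is at most `n`. -/
theorem tree_exists_centroid {V : Type*} [Fintype V] (T : SimpleGraph V) (hT : T.IsTree) :
    ∃ v : V, ∀ C : (T.induce {u : V | u ≠ v}).ConnectedComponent,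
      2 * C.supp.ncard ≤ Fintype.card V := by
  obtain ⟨v, hv⟩ := hT.exists_forall_two_mul_ncard_branch_le
  refine ⟨v, SimpleGraph.ConnectedComponent.ind fun x => ?_⟩
  rw [← Set.ncard_image_of_injective _ Subtype.val_injective,
    SimpleGraph.image_val_supp_connectedComponentMk_induce_ne, ← Nat.card_eq_fintype_card]
  exact hv x
end

section
/- Let G be a finite connected simple graph with edge weights w : E(G) → ℝ, and let T be a spanning tree of G. Then T is a minimum-weight spanning tree of G if and only if for every edge e = {u,v} of G not in T, the weight w(e) is greater than or equal to the weight of every edge on the unique path in T between u and v. -/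
/-- The total weight of (the edges of) a graph `T` on a finite vertex type,
with respect to an edge-weight function `w`. -/
noncomputable def treeWeight {V : Type*} [Fintype V] {R : Type*} [AddCommMonoid R]
    (T : SimpleGraph V) (w : Sym2 V → R) : R :=
  letI : Fintype T.edgeSet := Fintype.ofFinite _
  ∑ e ∈ T.edgeSet.toFinset, w e

/-!
Everything rests on the exchange `T - f + uv`, where `uv` is a non-edge of the tree `T` and `f`
lies on the `T`-path from `u` to `v`: it is again a tree and its weight is
`treeWeight T w - w f + w uv`. If `T` is minimum, this exchange cannot decrease the weight, which
is the cycle property. Conversely, for another spanning tree `T'` and an edge `xy` of `T` not in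
`T'`, the `T'`-path from `x` to `y` has an edge `ab` crossing the cut of `T - xy`; then `xy` lies
on the `T`-path from `a` to `b`, so the cycle property gives `w xy ≤ w ab`, and
`T' - ab + xy` is a spanning tree no heavier than `T'` sharing one more edge with `T`.
-/

lemma Set.ncard_insert_sdiff_singleton_sdiff_lt {α : Type*} {s t : Set α} {a b : α}
    (hs : s.Finite) (ha : a ∈ t) (hb : b ∈ s \ t) :
    ((insert a s \ {b}) \ t).ncard < (s \ t).ncard := by
  refine Set.ncard_lt_ncard ((Set.ssubset_iff_of_subset ?_).mpr ⟨b, hb, by simp⟩) hs.sdiff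
  rintro x ⟨⟨rfl | hx, -⟩, hxt⟩
  exacts [absurd ha hxt, ⟨hx, hxt⟩]

namespace SimpleGraph

variable {V : Type*} {T H : SimpleGraph V} {u v x y : V} {f : Sym2 V}

lemma edgeSet_sup_edge_deleteEdges (huv : u ≠ v) :
    ((T ⊔ edge u v).deleteEdges {f}).edgeSet = insert s(u, v) T.edgeSet \ {f} := by
  rw [edgeSet_deleteEdges, edgeSet_sup, edgeSet_edge_of_ne huv, Set.union_singleton]

lemma sup_edge_deleteEdges_le {G : SimpleGraph V} (hTG : T ≤ G) (huv : G.Adj u v) :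
    (T ⊔ edge u v).deleteEdges {f} ≤ G :=
  (deleteEdges_le _).trans (sup_le hTG ((edge_le_iff G).mpr (Or.inr huv)))

theorem IsTree.sup_edge_deleteEdges [Finite V] (hT : T.IsTree) {p : T.Walk u v} (hp : p.IsPath)
    (huv : ¬T.Adj u v) (hf : f ∈ p.edges) : ((T ⊔ edge u v).deleteEdges {f}).IsTree := by
  have hne : u ≠ v := by
    rintro rfl
    simp [Walk.eq_nil_iff_nil.mpr (Walk.isPath_iff_nil.mp hp)] at hf
  have hadj : (T ⊔ edge u v).Adj u v := Or.inr (by simp [edge_adj, hne])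
  have hcycle : (Walk.cons hadj (p.mapLe le_sup_left).reverse).IsCycle := by
    refine (Walk.cons_isCycle_iff _ _).mpr ⟨(hp.mapLe _).reverse, ?_⟩
    rw [Walk.edges_reverse, List.mem_reverse, Walk.edges_mapLe_eq_edges]
    exact fun h ↦ huv (p.edges_subset_edgeSet h)
  have hbridge : ¬(T ⊔ edge u v).IsBridge f := fun h ↦
    h.notMem_edges_of_isCycle hcycle (by simp [hf])
  have hconn : ((T ⊔ edge u v).deleteEdges {f}).Connected := by
    induction f with
    | h a b => exact (hT.connected.mono le_sup_left).connected_delete_edge_of_not_isBridge hbridge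
  have hcard : T.edgeSet.ncard + 1 = Nat.card V := by
    rw [← Nat.card_coe_set_eq]
    exact (isTree_iff_connected_and_card.mp hT).2
  have hf' : f ∈ insert s(u, v) T.edgeSet := Set.mem_insert_of_mem _ (p.edges_subset_edgeSet hf)
  refine isTree_iff_connected_and_card.mpr ⟨hconn, ?_⟩
  rw [Nat.card_coe_set_eq, edgeSet_sup_edge_deleteEdges hne, Set.ncard_sdiff_singleton_of_mem hf',
    Set.ncard_insert_of_notMem (show s(u, v) ∉ T.edgeSet from huv), Nat.add_sub_cancel, hcard]

theorem IsBridge.exists_mem_edges_forall_walk_mem_edges (h : T.IsBridge s(x, y))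
    (q : H.Walk x y) : ∃ a b, s(a, b) ∈ q.edges ∧ ∀ r : T.Walk a b, s(x, y) ∈ r.edges := by
  -- `ab` is an edge of `q` leaving the component of `x` in `T - xy`
  obtain ⟨d, hd, ha, hb⟩ := q.exists_boundary_dart {z | (T.deleteEdges {s(x, y)}).Reachable x z}
    (Reachable.refl x) h
  refine ⟨d.fst, d.snd, List.mem_map_of_mem hd, fun r ↦ ?_⟩
  by_contra hr
  exact hb (ha.trans (reachable_deleteEdges_iff_exists_walk.mpr ⟨r, hr⟩))

end SimpleGraph

open SimpleGraph

section MinimumSpanningTree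

variable {V : Type*} [Fintype V] {R : Type*} [AddCommMonoid R]

lemma treeWeight_eq_finsum (T : SimpleGraph V) (w : Sym2 V → R) :
    treeWeight T w = ∑ᶠ e ∈ T.edgeSet, w e := by
  let : Fintype T.edgeSet := Fintype.ofFinite _
  exact (finsum_mem_eq_toFinset_sum w _).symm

lemma treeWeight_sup_edge_deleteEdges_add {T : SimpleGraph V} {u v : V} {f : Sym2 V}
    (huv : ¬T.Adj u v) (hne : u ≠ v) (hf : f ∈ T.edgeSet) (w : Sym2 V → R) :
    treeWeight ((T ⊔ edge u v).deleteEdges {f}) w + w f = treeWeight T w + w s(u, v) := by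
  have hf' : f ∉ insert s(u, v) T.edgeSet \ {f} := fun h ↦ h.2 rfl
  rw [treeWeight_eq_finsum, treeWeight_eq_finsum, edgeSet_sup_edge_deleteEdges hne, add_comm,
    ← finsum_mem_insert w hf' (Set.toFinite _), Set.insert_sdiff_singleton,
    Set.insert_eq_of_mem (Set.mem_insert_of_mem _ hf), finsum_mem_insert w huv (Set.toFinite _),
    add_comm]

variable [PartialOrder R] [IsOrderedCancelAddMonoid R] {G T : SimpleGraph V} {w : Sym2 V → R}

theorem weight_le_of_forall_treeWeight_le (hTG : T ≤ G) (hT : T.IsTree)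
    (hmin : ∀ T' ≤ G, T'.IsTree → treeWeight T w ≤ treeWeight T' w) {u v : V}
    (huv : G.Adj u v) (hTuv : ¬T.Adj u v) {p : T.Walk u v} (hp : p.IsPath) {e : Sym2 V}
    (he : e ∈ p.edges) : w e ≤ w s(u, v) := by
  have hexch := treeWeight_sup_edge_deleteEdges_add hTuv huv.ne (p.edges_subset_edgeSet he) w
  have hle := hmin _ (sup_edge_deleteEdges_le hTG huv) (hT.sup_edge_deleteEdges hp hTuv he)
  rw [← add_le_add_iff_left (treeWeight T w), ← hexch]
  exact add_le_add_left hle _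

theorem treeWeight_le_of_forall_weight_le (hTG : T ≤ G) (hT : T.IsTree)
    (hcycle : ∀ u v : V, G.Adj u v → ¬T.Adj u v →
      ∀ p : T.Walk u v, p.IsPath → ∀ e ∈ p.edges, w e ≤ w s(u, v))
    (T' : SimpleGraph V) (hT'G : T' ≤ G) (hT' : T'.IsTree) :
    treeWeight T w ≤ treeWeight T' w := by
  by_cases hle : T ≤ T'
  · rw [(isTree_iff_minimal_connected.mp hT').eq_of_le hT.connected hle]
  obtain ⟨e, heT, heT'⟩ := Set.not_subset.mp (mt edgeSet_subset_edgeSet.mp hle)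
  induction e with | h x y => ?_
  obtain ⟨q, hq⟩ := hT'.connected.exists_isPath x y
  have hbridge := isAcyclic_iff_forall_adj_isBridge.mp hT.isAcyclic heT
  obtain ⟨a, b, hab, hcross⟩ := hbridge.exists_mem_edges_forall_walk_mem_edges q
  have hTab : ¬T.Adj a b := fun h ↦ by
    have hxy : s(x, y) = s(a, b) := by simpa using hcross (Walk.cons h Walk.nil)
    exact heT' (hxy ▸ q.edges_subset_edgeSet hab)
  obtain ⟨r, hr⟩ := hT.connected.exists_isPath a b
  have hw : w s(x, y) ≤ w s(a, b) :=
    hcycle a b (hT'G (q.adj_of_mem_edges hab)) hTab r hr _ (hcross r)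
  set T'' := (T' ⊔ edge x y).deleteEdges {s(a, b)}
  have hexch := treeWeight_sup_edge_deleteEdges_add heT' heT.ne (q.edges_subset_edgeSet hab) w
  have hdecr : (T''.edgeSet \ T.edgeSet).ncard < (T'.edgeSet \ T.edgeSet).ncard := by
    rw [edgeSet_sup_edge_deleteEdges heT.ne]
    exact Set.ncard_insert_sdiff_singleton_sdiff_lt (Set.toFinite _) heT
      ⟨q.edges_subset_edgeSet hab, hTab⟩
  have ih := treeWeight_le_of_forall_weight_le hTG hT hcycle T''
    (sup_edge_deleteEdges_le hT'G (hTG heT)) (hT'.sup_edge_deleteEdges hq heT' hab)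
  exact ih.trans (le_of_add_le_add_right (hexch.trans_le (add_le_add_right hw _)))
termination_by (T'.edgeSet \ T.edgeSet).ncard
decreasing_by exact hdecr

end MinimumSpanningTree

theorem mst_iff_cycle_property_general {V : Type*} [Fintype V] (G : SimpleGraph V)
    (w : Sym2 V → ℝ)
    (T : SimpleGraph V) (hTG : T ≤ G) (hT : T.IsTree) :
    (∀ T' : SimpleGraph V, T' ≤ G → T'.IsTree → treeWeight T w ≤ treeWeight T' w) ↔
      (∀ u v : V, G.Adj u v → ¬ T.Adj u v →
        ∀ p : T.Walk u v, p.IsPath → ∀ e ∈ p.edges, w e ≤ w s(u, v)) :=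
  ⟨fun hmin _ _ huv hTuv _ hp _ he ↦ weight_le_of_forall_treeWeight_le hTG hT hmin huv hTuv hp he,
    treeWeight_le_of_forall_weight_le hTG hT⟩

/-- **Cycle-property characterization of minimum spanning trees.** Let `G` be a finite
connected simple graph with real edge weights `w`, and let `T` be a spanning tree of `G`
(a connected acyclic spanning subgraph). Then `T` is a minimum spanning tree of `G` if and
only if for every edge `{u, v}` of `G` not in `T`, the weight `w {u, v}` is at least the
weight of every edge on the unique path in `T` between `u` and `v`. -/
theorem mst_iff_cycle_property {V : Type*} [Fintype V] (G : SimpleGraph V)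
    (hG : G.Connected) (w : Sym2 V → ℝ)
    (T : SimpleGraph V) (hTG : T ≤ G) (hT : T.IsTree) :
    (∀ T' : SimpleGraph V, T' ≤ G → T'.IsTree → treeWeight T w ≤ treeWeight T' w) ↔
      (∀ u v : V, G.Adj u v → ¬ T.Adj u v →
        ∀ p : T.Walk u v, p.IsPath → ∀ e ∈ p.edges, w e ≤ w s(u, v)) :=
  mst_iff_cycle_property_general G w T hTG hT
end

section
/- Fix an integer L ≥ 2 and let n = 2^L. Define the milestone sets M_k recursively: M_0 = {2^i : 0 ≤ i ≤ L}, and M_{j+1} is obtained from M_j by adding, for every pair of consecutive elements a < b of M_j with b − a ≥ 2, the midpoint (a+b)/2. Then for every k with 0 ≤ k ≤ L − 1, the set M_k has exactly 2^k · (L − k + 1) elements. -/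
/-!
The set `M_k` is the set of integers `x ∈ [1, 2 ^ L]` whose binary expansion has at most `k + 1`
significant digits, i.e. which are divisible by `2 ^ (log₂ x - k)`. In this grid the successor of
`a < 2 ^ L` is `a + 2 ^ (log₂ a - k)`, so the gaps of length at least `2` start exactly at the
points `a ≥ 2 ^ (k + 1)` other than `2 ^ L`, and their midpoints are the points of the next grid
that are not already in this one. Hence `|M_{k+1}| = 2 |M_k| - 2 ^ (k + 1)`, and
`|M_0| = L + 1` gives the formula by induction.
-/

/-- The milestone sets `M_k ⊆ [1, 2 ^ L]`: `M_0 = {2 ^ i : 0 ≤ i ≤ L}`, and `M_{j+1}` is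
obtained from `M_j` by adding, for every pair of consecutive elements `a < b` of `M_j`
with `b − a ≥ 2`, the midpoint `(a + b) / 2` (an integer `c` with `a + b = 2 * c`). -/
def milestones (L : ℕ) : ℕ → Finset ℕ
  | 0 => (Finset.range (L + 1)).image (fun i => 2 ^ i)
  | j + 1 =>
      milestones L j ∪
        (Finset.range (2 ^ L + 1)).filter (fun c =>
          ∃ a ∈ milestones L j, ∃ b ∈ milestones L j,
            a < b ∧ (∀ x ∈ milestones L j, ¬(a < x ∧ x < b)) ∧ 2 ≤ b - a ∧ a + b = 2 * c)

open Finset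

lemma add_le_of_dvd_of_lt {d a b : ℕ} (ha : d ∣ a) (hb : d ∣ b) (h : a < b) :
    a + d ≤ b := by
  have := Nat.le_of_dvd (Nat.sub_pos_of_lt h) (Nat.dvd_sub hb ha)
  omega

lemma two_pow_log_eq_self_of_dvd {x : ℕ} (hx : x ≠ 0) (h : 2 ^ Nat.log 2 x ∣ x) :
    2 ^ Nat.log 2 x = x := by
  refine (Nat.pow_log_le_self 2 hx).antisymm (not_lt.1 fun hlt ↦ ?_)
  have hdouble := add_le_of_dvd_of_lt dvd_rfl h hlt
  have hlt_succ := Nat.lt_pow_succ_log_self one_lt_two x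
  rw [pow_succ] at hlt_succ
  omega

/-- For `x < 2 ^ L` in `dyadicGrid L k`, the distance from `x` to the next point of the grid. -/
def gridSpacing (k x : ℕ) : ℕ := 2 ^ (Nat.log 2 x - k)

def dyadicGrid (L k : ℕ) : Finset ℕ := {x ∈ Icc 1 (2 ^ L) | gridSpacing k x ∣ x}

/-- The left endpoints of the gaps of length at least `2` in `dyadicGrid L k`. -/
def wideGapStarts (L k : ℕ) : Finset ℕ := {a ∈ dyadicGrid L k | k < Nat.log 2 a ∧ a < 2 ^ L}

section gridSpacing

variable {k x : ℕ}

lemma gridSpacing_pos : 0 < gridSpacing k x := Nat.two_pow_pos _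

lemma one_lt_gridSpacing_iff : 1 < gridSpacing k x ↔ k < Nat.log 2 x := by
  rw [gridSpacing, Nat.one_lt_two_pow_iff]
  omega

lemma gridSpacing_eq_two_mul (h : k < Nat.log 2 x) :
    gridSpacing k x = 2 * gridSpacing (k + 1) x := by
  rw [gridSpacing, gridSpacing, ← pow_succ']
  congr 1
  omega

lemma add_gridSpacing_le (h : gridSpacing k x ∣ x) :
    x + gridSpacing k x ≤ 2 ^ (Nat.log 2 x + 1) :=
  add_le_of_dvd_of_lt h (Nat.pow_dvd_pow 2 (by omega)) (Nat.lt_pow_succ_log_self one_lt_two x)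

lemma log_eq_of_le_of_lt_add_gridSpacing {y : ℕ} (hx : x ≠ 0) (h : gridSpacing k x ∣ x)
    (hxy : x ≤ y) (hy : y < x + gridSpacing k x) : Nat.log 2 y = Nat.log 2 x :=
  Nat.log_eq_of_pow_le_of_lt_pow ((Nat.pow_log_le_self 2 hx).trans hxy)
    (hy.trans_le (add_gridSpacing_le h))

end gridSpacing

section dyadicGrid

variable {L k : ℕ}

lemma mem_dyadicGrid {x : ℕ} :
    x ∈ dyadicGrid L k ↔ (1 ≤ x ∧ x ≤ 2 ^ L) ∧ gridSpacing k x ∣ x := by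
  rw [dyadicGrid, mem_filter, mem_Icc]

lemma pow_mem_dyadicGrid {j : ℕ} (hj : j ≤ L) : 2 ^ j ∈ dyadicGrid L k := by
  refine mem_dyadicGrid.2 ⟨⟨Nat.one_le_two_pow, Nat.pow_le_pow_right two_pos hj⟩, ?_⟩
  rw [gridSpacing, Nat.log_pow one_lt_two]
  exact Nat.pow_dvd_pow 2 (Nat.sub_le j k)

lemma mem_dyadicGrid_of_log_le {x : ℕ} (hx : 1 ≤ x ∧ x ≤ 2 ^ L) (hlog : Nat.log 2 x ≤ k) :
    x ∈ dyadicGrid L k := by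
  refine mem_dyadicGrid.2 ⟨hx, ?_⟩
  rw [gridSpacing, Nat.sub_eq_zero_of_le hlog, pow_zero]
  exact one_dvd x

lemma dyadicGrid_subset_succ : dyadicGrid L k ⊆ dyadicGrid L (k + 1) := fun x hx ↦ by
  obtain ⟨hbounds, hdvd⟩ := mem_dyadicGrid.1 hx
  exact mem_dyadicGrid.2 ⟨hbounds, (Nat.pow_dvd_pow 2 (by omega)).trans hdvd⟩

lemma dyadicGrid_zero (L : ℕ) : dyadicGrid L 0 = (range (L + 1)).image (2 ^ ·) := by
  ext x
  simp only [mem_image, mem_range, Nat.lt_succ_iff]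
  constructor
  · intro hx
    obtain ⟨⟨hx1, hxL⟩, hdvd⟩ := mem_dyadicGrid.1 hx
    have hpow : 2 ^ Nat.log 2 x = x := two_pow_log_eq_self_of_dvd (by omega) hdvd
    refine ⟨Nat.log 2 x, (Nat.pow_le_pow_iff_right one_lt_two).1 ?_, hpow⟩
    rwa [hpow]
  · rintro ⟨i, hi, rfl⟩
    exact pow_mem_dyadicGrid hi

lemma add_gridSpacing_mem {a : ℕ} (ha : a ∈ dyadicGrid L k) (haL : a < 2 ^ L) :
    a + gridSpacing k a ∈ dyadicGrid L k := by
  obtain ⟨⟨ha1, -⟩, hdvd⟩ := mem_dyadicGrid.1 ha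
  have hlogL : Nat.log 2 a + 1 ≤ L := (Nat.log_lt_iff_lt_pow one_lt_two (by omega)).2 haL
  have hle := add_gridSpacing_le hdvd
  rcases hle.eq_or_lt with heq | hlt
  · rw [heq]
    exact pow_mem_dyadicGrid hlogL
  · have hlog : Nat.log 2 (a + gridSpacing k a) = Nat.log 2 a :=
      Nat.log_eq_of_pow_le_of_lt_pow ((Nat.pow_log_le_self 2 (by omega)).trans le_self_add) hlt
    refine mem_dyadicGrid.2 ⟨⟨by omega, hle.trans (Nat.pow_le_pow_right two_pos hlogL)⟩, ?_⟩
    rw [gridSpacing, hlog]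
    exact dvd_add hdvd dvd_rfl

lemma notMem_dyadicGrid_of_lt_of_lt_add_gridSpacing {a y : ℕ} (ha : a ∈ dyadicGrid L k)
    (hay : a < y) (hy : y < a + gridSpacing k a) : y ∉ dyadicGrid L k := fun hyG ↦ by
  obtain ⟨⟨ha1, -⟩, hdvd⟩ := mem_dyadicGrid.1 ha
  have hlog := log_eq_of_le_of_lt_add_gridSpacing (by omega) hdvd hay.le hy
  have hydvd : gridSpacing k a ∣ y := by
    simpa only [gridSpacing, hlog] using (mem_dyadicGrid.1 hyG).2
  have := add_le_of_dvd_of_lt hdvd hydvd hay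
  omega

lemma consecutive_in_dyadicGrid_iff {a b : ℕ} (ha : a ∈ dyadicGrid L k) :
    (b ∈ dyadicGrid L k ∧ a < b ∧ ∀ x ∈ dyadicGrid L k, ¬(a < x ∧ x < b)) ↔
      a < 2 ^ L ∧ b = a + gridSpacing k a := by
  have hspacing : 0 < gridSpacing k a := gridSpacing_pos
  constructor
  · rintro ⟨hb, hab, hgap⟩
    have haL : a < 2 ^ L := hab.trans_le (mem_dyadicGrid.1 hb).1.2
    refine ⟨haL, le_antisymm (not_lt.1 fun hlt ↦ ?_) (not_lt.1 fun hlt ↦ ?_)⟩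
    · exact hgap _ (add_gridSpacing_mem ha haL) ⟨by omega, hlt⟩
    · exact notMem_dyadicGrid_of_lt_of_lt_add_gridSpacing ha hab hlt hb
  · rintro ⟨haL, rfl⟩
    exact ⟨add_gridSpacing_mem ha haL, by omega, fun x hx ⟨hax, hxb⟩ ↦
      notMem_dyadicGrid_of_lt_of_lt_add_gridSpacing ha hax hxb hx⟩

lemma exists_wide_gap_midpoint_iff {c : ℕ} :
    (∃ a ∈ dyadicGrid L k, ∃ b ∈ dyadicGrid L k, a < b ∧
        (∀ x ∈ dyadicGrid L k, ¬(a < x ∧ x < b)) ∧ 2 ≤ b - a ∧ a + b = 2 * c) ↔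
      ∃ a ∈ wideGapStarts L k, a + gridSpacing (k + 1) a = c := by
  constructor
  · rintro ⟨a, ha, b, hb, hab, hgap, hwide, hsum⟩
    obtain ⟨haL, rfl⟩ := (consecutive_in_dyadicGrid_iff ha).1 ⟨hb, hab, hgap⟩
    have hk : k < Nat.log 2 a := one_lt_gridSpacing_iff.1 (by omega)
    refine ⟨a, mem_filter.2 ⟨ha, hk, haL⟩, ?_⟩
    rw [gridSpacing_eq_two_mul hk] at hsum
    omega
  · rintro ⟨a, haW, rfl⟩
    obtain ⟨ha, hk, haL⟩ := mem_filter.1 haW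
    obtain ⟨hb, hab, hgap⟩ := (consecutive_in_dyadicGrid_iff ha).2 ⟨haL, rfl⟩
    have hspacing : 0 < gridSpacing (k + 1) a := gridSpacing_pos
    refine ⟨a, ha, _, hb, hab, hgap, ?_, ?_⟩ <;> rw [gridSpacing_eq_two_mul hk] <;> omega

lemma log_add_gridSpacing_succ {a : ℕ} (ha : a ∈ wideGapStarts L k) :
    Nat.log 2 (a + gridSpacing (k + 1) a) = Nat.log 2 a := by
  obtain ⟨haG, hk, -⟩ := mem_filter.1 ha
  obtain ⟨⟨ha1, -⟩, hdvd⟩ := mem_dyadicGrid.1 haG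
  have hspacing : 0 < gridSpacing (k + 1) a := gridSpacing_pos
  refine log_eq_of_le_of_lt_add_gridSpacing (by omega) hdvd le_self_add ?_
  rw [gridSpacing_eq_two_mul hk]
  omega

lemma add_gridSpacing_succ_mem {a : ℕ} (ha : a ∈ wideGapStarts L k) :
    a + gridSpacing (k + 1) a ∈ dyadicGrid L (k + 1) := by
  obtain ⟨haG, hk, haL⟩ := mem_filter.1 ha
  obtain ⟨⟨ha1, -⟩, hdvd⟩ := mem_dyadicGrid.1 haG
  have hnext := (mem_dyadicGrid.1 (add_gridSpacing_mem haG haL)).1.2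
  rw [gridSpacing_eq_two_mul hk] at hdvd hnext
  refine mem_dyadicGrid.2 ⟨⟨by omega, by omega⟩, ?_⟩
  rw [gridSpacing, log_add_gridSpacing_succ ha]
  exact dvd_add (dvd_of_mul_left_dvd hdvd) dvd_rfl

lemma exists_wideGapStart_of_mem_succ_of_notMem {x : ℕ} (hx : x ∈ dyadicGrid L (k + 1))
    (hxk : x ∉ dyadicGrid L k) : ∃ a ∈ wideGapStarts L k, a + gridSpacing (k + 1) a = x := by
  obtain ⟨⟨hx1, hxL⟩, hdvd⟩ := mem_dyadicGrid.1 hx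
  have hk : k < Nat.log 2 x :=
    not_le.1 fun hlog ↦ hxk (mem_dyadicGrid_of_log_le ⟨hx1, hxL⟩ hlog)
  have hndvd : ¬2 * gridSpacing (k + 1) x ∣ x := by
    rw [← gridSpacing_eq_two_mul hk]
    exact fun h ↦ hxk (mem_dyadicGrid.2 ⟨⟨hx1, hxL⟩, h⟩)
  set h := gridSpacing (k + 1) x
  obtain ⟨j, hxj⟩ : ∃ j, x = 2 * h * j + h := by
    obtain ⟨m, hm⟩ := hdvd
    obtain ⟨j, rfl⟩ : Odd m := Nat.odd_iff.2 <| Nat.two_dvd_ne_zero.1 fun h2m ↦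
      hndvd (hm ▸ mul_comm h 2 ▸ mul_dvd_mul_left h h2m)
    exact ⟨j, by rw [hm]; ring⟩
  have hlow : 2 ^ Nat.log 2 x + h ≤ x := by
    refine add_le_of_dvd_of_lt (Nat.pow_dvd_pow 2 (by omega)) hdvd
      ((Nat.pow_log_le_self 2 (by omega)).lt_of_ne fun heq ↦ hndvd ?_)
    rw [← heq, ← gridSpacing_eq_two_mul hk]
    exact Nat.pow_dvd_pow 2 (by omega)
  have hlog : Nat.log 2 (2 * h * j) = Nat.log 2 x :=
    Nat.log_eq_of_pow_le_of_lt_pow (by omega)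
      ((Nat.lt_pow_succ_log_self one_lt_two x).trans_le' (by omega))
  have hspacing : gridSpacing (k + 1) (2 * h * j) = h := by rw [gridSpacing, hlog]; rfl
  have hpos : 0 < h := gridSpacing_pos
  have hone : 1 ≤ 2 ^ Nat.log 2 x := Nat.one_le_two_pow
  have hka : k < Nat.log 2 (2 * h * j) := hlog ▸ hk
  have hdvd_a : gridSpacing k (2 * h * j) ∣ 2 * h * j := by
    rw [gridSpacing_eq_two_mul hka, hspacing]
    exact Dvd.intro j rfl
  have ha : 2 * h * j ∈ dyadicGrid L k := mem_dyadicGrid.2 ⟨⟨by omega, by omega⟩, hdvd_a⟩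
  exact ⟨2 * h * j, mem_filter.2 ⟨ha, hka, by omega⟩, by omega⟩

lemma dyadicGrid_succ : dyadicGrid L (k + 1) =
    dyadicGrid L k ∪ (wideGapStarts L k).image fun a ↦ a + gridSpacing (k + 1) a := by
  ext x
  rw [mem_union, mem_image]
  constructor
  · intro hx
    by_cases hxk : x ∈ dyadicGrid L k
    · exact Or.inl hxk
    · exact Or.inr (exists_wideGapStart_of_mem_succ_of_notMem hx hxk)
  · rintro (hx | ⟨a, ha, rfl⟩)
    · exact dyadicGrid_subset_succ hx
    · exact add_gridSpacing_succ_mem ha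

end dyadicGrid

theorem milestones_eq_dyadicGrid (L k : ℕ) : milestones L k = dyadicGrid L k := by
  induction k with
  | zero => exact (dyadicGrid_zero L).symm
  | succ k ih =>
    rw [milestones, ih, dyadicGrid_succ]
    congr 1
    ext c
    simp only [mem_filter, mem_range, exists_wide_gap_midpoint_iff, mem_image]
    refine ⟨And.right, fun hc ↦ ⟨?_, hc⟩⟩
    obtain ⟨a, ha, rfl⟩ := hc
    exact Nat.lt_succ_of_le (mem_dyadicGrid.1 (add_gridSpacing_succ_mem ha)).1.2

section card

variable {L k : ℕ}

lemma card_dyadicGrid_eq_card_wideGapStarts_add (hk : k < L) :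
    #(dyadicGrid L k) = #(wideGapStarts L k) + 2 ^ (k + 1) := by
  have hpow : 2 ^ (k + 1) ≤ 2 ^ L := Nat.pow_le_pow_right two_pos hk
  have hrest : {a ∈ dyadicGrid L k | ¬(k < Nat.log 2 a ∧ a < 2 ^ L)} =
      insert (2 ^ L) (Ico 1 (2 ^ (k + 1))) := by
    ext a
    rw [mem_filter, mem_insert, mem_Ico]
    constructor
    · rintro ⟨ha, hnot⟩
      obtain ⟨⟨ha1, haL⟩, -⟩ := mem_dyadicGrid.1 ha
      rw [← Nat.log_lt_iff_lt_pow one_lt_two (by omega)]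
      omega
    · rintro (rfl | ⟨ha1, hak⟩)
      · exact ⟨pow_mem_dyadicGrid le_rfl, fun h ↦ h.2.false⟩
      · have hlog : Nat.log 2 a < k + 1 := (Nat.log_lt_iff_lt_pow one_lt_two (by omega)).2 hak
        exact ⟨mem_dyadicGrid_of_log_le ⟨ha1, by omega⟩ (by omega), by omega⟩
  rw [← card_filter_add_card_filter_not (fun a ↦ k < Nat.log 2 a ∧ a < 2 ^ L), hrest,
    card_insert_of_notMem (by rw [mem_Ico]; omega), Nat.card_Ico,
    Nat.sub_add_cancel Nat.one_le_two_pow]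
  rfl

lemma card_dyadicGrid_zero : #(dyadicGrid L 0) = L + 1 := by
  rw [dyadicGrid_zero, card_image_of_injective _ (Nat.pow_right_injective le_rfl), card_range]

lemma card_dyadicGrid_succ (hk : k < L) :
    #(dyadicGrid L (k + 1)) + 2 ^ (k + 1) = 2 * #(dyadicGrid L k) := by
  have hdisj : Disjoint (dyadicGrid L k)
      ((wideGapStarts L k).image fun a ↦ a + gridSpacing (k + 1) a) := by
    refine disjoint_right.2 fun x hx hxG ↦ ?_
    obtain ⟨a, ha, rfl⟩ := mem_image.1 hx
    obtain ⟨haG, hlog, -⟩ := mem_filter.1 ha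
    have hspacing : 0 < gridSpacing (k + 1) a := gridSpacing_pos
    refine notMem_dyadicGrid_of_lt_of_lt_add_gridSpacing haG (by omega) ?_ hxG
    rw [gridSpacing_eq_two_mul hlog]
    omega
  have hinj : Set.InjOn (fun a ↦ a + gridSpacing (k + 1) a) (wideGapStarts L k) := by
    intro a ha a' ha' heq
    have hlog : Nat.log 2 a = Nat.log 2 a' := by
      rw [← log_add_gridSpacing_succ ha, ← log_add_gridSpacing_succ ha']
      exact congrArg _ heq
    simp only [gridSpacing, hlog] at heq
    omega
  rw [dyadicGrid_succ, card_union_of_disjoint hdisj, card_image_of_injOn hinj,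
    card_dyadicGrid_eq_card_wideGapStarts_add hk]
  ring

lemma card_dyadicGrid (hk : k ≤ L) : #(dyadicGrid L k) = 2 ^ k * (L - k + 1) := by
  induction k with
  | zero => rw [card_dyadicGrid_zero, pow_zero, one_mul, Nat.sub_zero]
  | succ k ih =>
    have hrec := card_dyadicGrid_succ (L := L) (k := k) (by omega)
    rw [ih (by omega), show L - k = L - (k + 1) + 1 by omega] at hrec
    rw [pow_succ] at hrec ⊢
    nlinarith

end card

theorem milestones_card_general (L : ℕ) (k : ℕ) (hk : k ≤ L - 1) :
    (milestones L k).card = 2 ^ k * (L - k + 1) := by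
  rw [milestones_eq_dyadicGrid, card_dyadicGrid (hk.trans (Nat.sub_le L 1))]

/-- **Cardinality of the milestone sets.** For `L ≥ 2` and every `k` with
`0 ≤ k ≤ L − 1`, the milestone set `M_k` has exactly `2 ^ k * (L − k + 1)` elements. -/
theorem milestones_card (L : ℕ) (hL : 2 ≤ L) (k : ℕ) (hk : k ≤ L - 1) :
    (milestones L k).card = 2 ^ k * (L - k + 1) :=
  milestones_card_general L k hk
end

section
/- Fix an integer L ≥ 2, let n = 2^L, and let M_k be the k-th milestone set. Then for every k with 0 ≤ k ≤ L − 1 and every integer w with 1 ≤ w ≤ n, the least element m of M_k with m ≥ w satisfies m ≤ (1 + 1/2^k) · w. -/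
/-- `m` is the result of rounding `w` up to the finite set `P`:
`m` is the least element of `P` that is greater than or equal to `w`. -/
def IsRoundUp (P : Finset ℕ) (w m : ℕ) : Prop :=
  m ∈ P ∧ w ≤ m ∧ ∀ x ∈ P, w ≤ x → m ≤ x

def inS (L k m : ℕ) : Prop := 1 ≤ m ∧ m ≤ 2 ^ L ∧ 2 ^ (Nat.size (m - 1) - (k + 1)) ∣ m

lemma size_eq_succ_iff {x i : ℕ} : Nat.size x = i + 1 ↔ 2 ^ i ≤ x ∧ x < 2 ^ (i + 1) := by
  constructor
  · intro h
    exact ⟨Nat.lt_size.mp (by omega), Nat.size_le.mp (by omega)⟩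
  · rintro ⟨h1, h2⟩
    have a := Nat.lt_size.mpr h1
    have b := Nat.size_le.mpr h2
    omega

lemma inS_two_pow (L k i : ℕ) (h : i ≤ L) : inS L k (2 ^ i) := by
  refine ⟨Nat.one_le_two_pow, Nat.pow_le_pow_right (by norm_num) h, ?_⟩
  apply pow_dvd_pow
  have h0 : 1 ≤ 2 ^ i := Nat.one_le_two_pow
  have h1 : Nat.size (2 ^ i - 1) ≤ i := Nat.size_le.mpr (by omega)
  omega

lemma inS_one (L k : ℕ) : inS L k 1 :=
  ⟨le_refl 1, Nat.one_le_two_pow, by simp⟩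

lemma inS_iff {L k m : ℕ} (hm : 2 ≤ m) :
    inS L k m ↔ ∃ i, i < L ∧ 2 ^ i < m ∧ m ≤ 2 ^ (i + 1) ∧ 2 ^ (i - k) ∣ m := by
  constructor
  · rintro ⟨h1, h2, h3⟩
    have hs : 1 ≤ Nat.size (m - 1) := by
      have := Nat.lt_size (m := 0) (n := m - 1)
      simp at this
      omega
    set i := Nat.size (m - 1) - 1 with hi
    have hsz : Nat.size (m - 1) = i + 1 := by omega
    obtain ⟨ha, hb⟩ := size_eq_succ_iff.mp hsz
    refine ⟨i, ?_, by omega, by omega, ?_⟩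
    · by_contra hcon
      have : 2 ^ L ≤ 2 ^ i := Nat.pow_le_pow_right (by norm_num) (by omega)
      omega
    · rw [hsz] at h3
      simpa using h3
  · rintro ⟨i, hiL, ha, hb, hdvd⟩
    have hsz : Nat.size (m - 1) = i + 1 := size_eq_succ_iff.mpr ⟨by omega, by omega⟩
    refine ⟨by omega, ?_, ?_⟩
    · calc m ≤ 2 ^ (i + 1) := hb
        _ ≤ 2 ^ L := Nat.pow_le_pow_right (by norm_num) (by omega)
    · rw [hsz]; simpa using hdvd

lemma inS_mono (L j m : ℕ) (h : inS L j m) : inS L (j + 1) m :=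
  ⟨h.1, h.2.1, dvd_trans (pow_dvd_pow 2 (by omega)) h.2.2⟩

lemma mem_milestones (L : ℕ) : ∀ k m, m ∈ milestones L k ↔ inS L k m := by
  intro k
  induction k with
  | zero =>
    intro m
    rw [milestones]
    simp only [Finset.mem_image, Finset.mem_range]
    constructor
    · rintro ⟨i, hi, rfl⟩
      exact inS_two_pow L 0 i (by omega)
    · intro hm
      rcases Nat.lt_or_ge m 2 with h2 | h2
      · have : m = 1 := by have := hm.1; omega
        exact ⟨0, by omega, by simp [this]⟩
      · obtain ⟨i, hiL, ha, hb, hdvd⟩ := (inS_iff h2).mp hm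
        simp only [Nat.sub_zero] at hdvd
        obtain ⟨t, rfl⟩ := hdvd
        have hi : 1 ≤ 2 ^ i := Nat.one_le_two_pow
        have h2i : 2 ^ (i + 1) = 2 ^ i * 2 := by ring
        have ht : t = 2 := by nlinarith
        exact ⟨i + 1, by omega, by subst ht; ring⟩
  | succ j ih =>
    intro m
    rw [milestones]
    simp only [Finset.mem_union, Finset.mem_filter, Finset.mem_range]
    constructor
    · rintro (h | ⟨hrange, a, ha, b, hb, hab, hcons, hgap, heq⟩)
      · exact inS_mono L j m (ih m |>.mp h)
      · have hSa := (ih a).mp ha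
        have hSb := (ih b).mp hb
        have hb2 : 2 ≤ b := by have := hSa.1; omega
        obtain ⟨i, hiL, hbi, hbi', hbdvd⟩ := (inS_iff hb2).mp hSb
        have hai : 2 ^ i ≤ a := by
          by_contra hcon
          have hpow : (2 : ℕ) ^ i ∈ milestones L j :=
            (ih _).mpr (inS_two_pow L j i (by omega))
          exact hcons _ hpow ⟨by omega, hbi⟩
        have hadvd : 2 ^ (i - j) ∣ a := by
          rcases Nat.eq_or_lt_of_le hai with h | h
          · rw [← h]; exact pow_dvd_pow _ (by omega)
          · have ha2 : 2 ≤ a := by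
              have : 1 ≤ 2 ^ i := Nat.one_le_two_pow; omega
            obtain ⟨i', hi'L, h1, h2, h3⟩ := (inS_iff ha2).mp hSa
            have hii' : i' = i := by
              have e1 : 2 ^ i < 2 ^ (i' + 1) := by omega
              have e2 : 2 ^ i' < 2 ^ (i + 1) := by omega
              have := (Nat.pow_lt_pow_iff_right (by norm_num : (1:ℕ) < 2)).mp e1
              have := (Nat.pow_lt_pow_iff_right (by norm_num : (1:ℕ) < 2)).mp e2
              omega
            rw [hii'] at h3; exact h3
        set g := 2 ^ (i - j) with hg
        have hgpos : 1 ≤ g := Nat.one_le_two_pow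
        have hgab : g ∣ b - a := Nat.dvd_sub hbdvd hadvd
        have hgle : g ≤ b - a := Nat.le_of_dvd (by omega) hgab
        have hba : b = a + g := by
          by_contra hcon
          have hx : a + g ∈ milestones L j := by
            refine (ih _).mpr ((inS_iff (by omega)).mpr ⟨i, hiL, by omega, by omega, ?_⟩)
            exact Nat.dvd_add hadvd dvd_rfl
          exact hcons _ hx ⟨by omega, by omega⟩
        have hij : 1 ≤ i - j := by
          by_contra hcon
          have hij0 : i - j = 0 := by omega
          have : g = 1 := by rw [hg, hij0]; simp
          omega
        have hghalf : g = 2 * 2 ^ (i - j - 1) := by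
          rw [hg, ← pow_succ']
          congr 1
          omega
        have hm' : m = a + 2 ^ (i - j - 1) := by omega
        have hieq : i - (j + 1) = i - j - 1 := by omega
        refine (inS_iff (by have := hSa.1; omega)).mpr ⟨i, hiL, by omega, by omega, ?_⟩
        rw [hieq, hm']
        exact Nat.dvd_add (dvd_trans (pow_dvd_pow 2 (by omega)) hadvd) dvd_rfl
    · intro hm
      by_cases hj : inS L j m
      · exact Or.inl ((ih m).mpr hj)
      · right
        have hm2 : 2 ≤ m := by
          rcases Nat.lt_or_ge m 2 with h | h
          · exfalso; apply hj
            have : m = 1 := by have := hm.1; omega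
            rw [this]; exact inS_one L j
          · exact h
        obtain ⟨i, hiL, h1, h2, h3⟩ := (inS_iff hm2).mp hm
        have hndvd : ¬ (2 ^ (i - j) ∣ m) := by
          intro hcon
          exact hj ((inS_iff hm2).mpr ⟨i, hiL, h1, h2, hcon⟩)
        have hij : 1 ≤ i - j := by
          by_contra hcon
          have : i - j = 0 := by omega
          apply hndvd; rw [this]; simp
        set g := 2 ^ (i - j - 1) with hg
        have hgpos : 1 ≤ g := Nat.one_le_two_pow
        have hieq : i - (j + 1) = i - j - 1 := by omega
        have hgm : g ∣ m := by rw [hg, ← hieq]; exact h3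
        have h2g : 2 * g = 2 ^ (i - j) := by
          rw [hg, ← pow_succ']; congr 1; omega
        have hgi : g ∣ 2 ^ i := pow_dvd_pow 2 (by omega)
        have hmlow : 2 ^ i + g ≤ m := by
          have hd : g ∣ m - 2 ^ i := Nat.dvd_sub hgm hgi
          have := Nat.le_of_dvd (by omega) hd
          omega
        have hgi1 : 2 * g ∣ 2 ^ (i + 1) := by
          rw [h2g]; exact pow_dvd_pow 2 (by omega)
        have hmhigh : m + g ≤ 2 ^ (i + 1) := by
          have hne : m ≠ 2 ^ (i + 1) := by
            intro hcon
            apply hndvd; rw [hcon, ← h2g]; exact hgi1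
          have hd : g ∣ 2 ^ (i + 1) - m :=
            Nat.dvd_sub (dvd_trans (dvd_mul_left g 2) hgi1) hgm
          have := Nat.le_of_dvd (by omega) hd
          omega
        obtain ⟨t, ht⟩ := hgm
        have htodd : ¬ (2 ∣ t) := by
          rintro ⟨s, rfl⟩
          apply hndvd
          rw [← h2g, ht]
          exact ⟨s, by ring⟩
        have hdvda : 2 ^ (i - j) ∣ m - g := by
          rw [← h2g, ht]
          obtain ⟨s, hs⟩ : 2 ∣ t - 1 := by omega
          have ht' : t = 2 * s + 1 := by omega
          refine ⟨s, ?_⟩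
          have : g * (2 * s + 1) = 2 * g * s + g := by ring
          rw [ht']
          omega
        have hdvdb : 2 ^ (i - j) ∣ m + g := by
          rw [← h2g, ht]
          obtain ⟨s, hs⟩ : 2 ∣ t + 1 := by omega
          exact ⟨s, by rw [← Nat.mul_add_one, hs]; ring⟩
        have hSa : inS L j (m - g) := by
          rcases Nat.eq_or_lt_of_le hmlow with h | h
          · have : m - g = 2 ^ i := by omega
            rw [this]; exact inS_two_pow L j i (by omega)
          · exact (inS_iff (by have : 1 ≤ 2 ^ i := Nat.one_le_two_pow; omega)).mpr
              ⟨i, hiL, by omega, by omega, hdvda⟩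
        have hSb : inS L j (m + g) := by
          exact (inS_iff (by omega)).mpr ⟨i, hiL, by omega, by omega, hdvdb⟩
        refine ⟨by have := hm.2.1; omega, m - g, (ih _).mpr hSa, m + g, (ih _).mpr hSb,
          by omega, ?_, by omega, by omega⟩
        intro x hx ⟨hx1, hx2⟩
        have hSx := (ih x).mp hx
        have hx2' : 2 ≤ x := by
          have : 1 ≤ 2 ^ i := Nat.one_le_two_pow
          omega
        obtain ⟨i', hi'L, e1, e2, e3⟩ := (inS_iff hx2').mp hSx
        have hii' : i' = i := by
          have f1 : 2 ^ i < 2 ^ (i' + 1) := by omega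
          have f2 : 2 ^ i' < 2 ^ (i + 1) := by omega
          have := (Nat.pow_lt_pow_iff_right (by norm_num : (1:ℕ) < 2)).mp f1
          have := (Nat.pow_lt_pow_iff_right (by norm_num : (1:ℕ) < 2)).mp f2
          omega
        rw [hii'] at e3
        -- x is a multiple of 2g strictly between m - g and m + g, so x = m
        have e3' : 2 * g ∣ x := by rw [h2g]; exact e3
        have hgx : g ∣ x := dvd_trans (dvd_mul_left g 2) e3'
        have hxm : x = m := by
          rcases le_or_gt x m with h | h
          · have hd : g ∣ m - x := Nat.dvd_sub (ht ▸ Dvd.intro t rfl) hgx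
            rcases Nat.eq_zero_or_pos (m - x) with h0 | h0
            · omega
            · have := Nat.le_of_dvd h0 hd; omega
          · have hd : g ∣ x - m := Nat.dvd_sub hgx (ht ▸ Dvd.intro t rfl)
            have := Nat.le_of_dvd (by omega) hd; omega
        exact hndvd (hxm ▸ e3)

lemma exists_good (L k w : ℕ) (hw1 : 1 ≤ w) (hw2 : w ≤ 2 ^ L) :
    ∃ p, inS L k p ∧ w ≤ p ∧ 2 ^ k * (p - w) ≤ w := by
  rcases Nat.lt_or_ge w 2 with h | h
  · have hw : w = 1 := by omega
    subst hw
    exact ⟨1, inS_one L k, le_refl 1, by simp⟩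
  · have hs : 1 ≤ Nat.size (w - 1) := by
      have := Nat.lt_size (m := 0) (n := w - 1)
      simp at this
      omega
    set i := Nat.size (w - 1) - 1 with hidef
    have hsz : Nat.size (w - 1) = i + 1 := by omega
    obtain ⟨ha, hb⟩ := size_eq_succ_iff.mp hsz
    have hwlow : 2 ^ i < w := by omega
    have hwhigh : w ≤ 2 ^ (i + 1) := by omega
    have hiL : i < L := by
      by_contra hcon
      have : 2 ^ L ≤ 2 ^ i := Nat.pow_le_pow_right (by norm_num) (by omega)
      omega
    set g := 2 ^ (i - k) with hg
    have hgpos : 1 ≤ g := Nat.one_le_two_pow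
    obtain ⟨p, hdvd, hwp, hpw⟩ : ∃ p, g ∣ p ∧ w ≤ p ∧ p ≤ w + (g - 1) := by
      rcases Nat.eq_zero_or_pos (w % g) with h0 | h0
      · exact ⟨w, Nat.dvd_of_mod_eq_zero h0, le_refl w, by omega⟩
      · have hmod : g * (w / g) + w % g = w := Nat.div_add_mod w g
        have hlt : w % g < g := Nat.mod_lt _ (by omega)
        exact ⟨g * (w / g) + g, ⟨w / g + 1, by ring⟩, by omega, by omega⟩
    have hgdvd2 : g ∣ 2 ^ (i + 1) := pow_dvd_pow 2 (by omega)
    have hple : p ≤ 2 ^ (i + 1) := by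
      by_contra hcon
      have hd : g ∣ p - 2 ^ (i + 1) := Nat.dvd_sub hdvd hgdvd2
      have := Nat.le_of_dvd (by omega) hd
      omega
    have hpS : inS L k p :=
      (inS_iff (by omega)).mpr ⟨i, hiL, by omega, hple, hdvd⟩
    refine ⟨p, hpS, hwp, ?_⟩
    rcases Nat.lt_or_ge k i with h' | h'
    · have hkg : 2 ^ k * g = 2 ^ i := by
        rw [hg, ← pow_add]; congr 1; omega
      have h1 : 2 ^ k * (p - w) ≤ 2 ^ k * (g - 1) := Nat.mul_le_mul_left _ (by omega)
      have h2 : 2 ^ k * (g - 1) + 2 ^ k = 2 ^ k * g := by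
        have hgg : g - 1 + 1 = g := by omega
        calc 2 ^ k * (g - 1) + 2 ^ k = 2 ^ k * (g - 1 + 1) := by ring
          _ = 2 ^ k * g := by rw [hgg]
      have h3 : 1 ≤ 2 ^ k := Nat.one_le_two_pow
      omega
    · have hg1 : g = 1 := by
        have hik : i - k = 0 := by omega
        rw [hg, hik]; simp
      have : p = w := by omega
      simp [this]

/-- **Approximation ratio of the milestone sets.** For `L ≥ 2`, `n = 2 ^ L`, every `k`
with `0 ≤ k ≤ L − 1` and every integer `w` with `1 ≤ w ≤ n`, the least element `m` of the
milestone set `M_k` with `m ≥ w` satisfies `m ≤ (1 + 1 / 2 ^ k) * w`. -/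
theorem milestones_roundup_approx (L : ℕ) (hL : 2 ≤ L) (k : ℕ) (hk : k ≤ L - 1) :
    ∀ w : ℕ, 1 ≤ w → w ≤ 2 ^ L →
      ∃ m : ℕ, IsRoundUp (milestones L k) w m ∧
        (m : ℝ) ≤ (1 + 1 / 2 ^ k) * (w : ℝ) := by
  intro w hw1 hw2
  obtain ⟨p, hpS, hwp, hbound⟩ := exists_good L k w hw1 hw2
  have hpmem : p ∈ milestones L k := (mem_milestones L k p).mpr hpS
  set T := (milestones L k).filter (fun x => w ≤ x) with hT
  have hpT : p ∈ T := Finset.mem_filter.mpr ⟨hpmem, hwp⟩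
  have hne : T.Nonempty := ⟨p, hpT⟩
  set m := T.min' hne with hm
  have hmT := Finset.mem_filter.mp (T.min'_mem hne)
  have hmin : ∀ x ∈ milestones L k, w ≤ x → m ≤ x := fun x hx hwx =>
    T.min'_le x (Finset.mem_filter.mpr ⟨hx, hwx⟩)
  refine ⟨m, ⟨hmT.1, hmT.2, hmin⟩, ?_⟩
  have hmp : m ≤ p := T.min'_le p hpT
  have h1 : (m : ℝ) ≤ (p : ℝ) := by exact_mod_cast hmp
  have h2 : (2 : ℝ) ^ k * ((p : ℝ) - (w : ℝ)) ≤ (w : ℝ) := by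
    have hc : ((2 ^ k * (p - w) : ℕ) : ℝ) ≤ ((w : ℕ) : ℝ) := by exact_mod_cast hbound
    push_cast [Nat.cast_sub hwp] at hc
    linarith
  have hpk : (0 : ℝ) < 2 ^ k := by positivity
  have h4 : (p : ℝ) - (w : ℝ) ≤ (w : ℝ) / 2 ^ k := by
    rw [le_div_iff₀ hpk]
    calc ((p : ℝ) - w) * 2 ^ k = 2 ^ k * ((p : ℝ) - w) := by ring
      _ ≤ w := h2
  have h5 : (1 + 1 / 2 ^ k) * (w : ℝ) = (w : ℝ) + (w : ℝ) / 2 ^ k := by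
    field_simp
  linarith
end

section
/- Fix integers L ≥ 1 and m ≥ 1 with m dividing L, let n = 2^L, and let S_m = {2^{i·m} : 0 ≤ i ≤ L/m}. Let G be a finite connected simple graph with integer edge weights w : E(G) → ℤ satisfying 1 ≤ w(e) ≤ n for every edge e, and define w'(e) as the least element of S_m that is ≥ w(e). Then every spanning tree of G of minimum total weight with respect to w' has total w-weight at most 2^m times the total w-weight of a minimum spanning tree of G with respect to w. -/
/-- **MSTs for coarsely rounded weights are `2^m`-approximate MSTs.** Fix `L ≥ 1` and
`m ≥ 1` with `m ∣ L`, let `n = 2 ^ L`, and let `S_m = {2 ^ (i * m) : 0 ≤ i ≤ L / m}`.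
Let `G` be a finite connected simple graph with integer edge weights `w` satisfying
`1 ≤ w e ≤ n` on every edge, and let `w' e` be the least element of `S_m` that is
`≥ w e`. Then every spanning tree `T'` of `G` of minimum total weight with respect to `w'`
has total `w`-weight at most `2 ^ m` times the total `w`-weight of a minimum spanning
tree `T` of `G` with respect to `w`. -/
theorem coarse_rounding_gives_approx_mst {V : Type*} [Fintype V]
    (L m : ℕ) (hL : 1 ≤ L) (hm : 1 ≤ m) (hdvd : m ∣ L)
    (G : SimpleGraph V) (hG : G.Connected) (w w' : Sym2 V → ℤ)
    (hw : ∀ e ∈ G.edgeSet, 1 ≤ w e ∧ w e ≤ 2 ^ L)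
    (hw' : ∀ e ∈ G.edgeSet,
      (∃ s ∈ (Finset.range (L / m + 1)).image (fun i => 2 ^ (i * m)), w' e = (s : ℤ)) ∧
        w e ≤ w' e ∧
        ∀ x ∈ (Finset.range (L / m + 1)).image (fun i => 2 ^ (i * m)),
          w e ≤ (x : ℤ) → w' e ≤ (x : ℤ))
    (T' : SimpleGraph V) (hT'G : T' ≤ G) (hT' : T'.IsTree)
    (hmin' : ∀ S : SimpleGraph V, S ≤ G → S.IsTree → treeWeight T' w' ≤ treeWeight S w')
    (T : SimpleGraph V) (hTG : T ≤ G) (hT : T.IsTree)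
    (hmin : ∀ S : SimpleGraph V, S ≤ G → S.IsTree → treeWeight T w ≤ treeWeight S w) :
    (treeWeight T' w : ℤ) ≤ 2 ^ m * (treeWeight T w : ℤ) := by

  classical
  have key : ∀ e ∈ G.edgeSet, w e ≤ w' e ∧ w' e ≤ 2 ^ m * w e := by
    intro e he
    obtain ⟨⟨s, hs, hws⟩, hle, hmn⟩ := hw' e he
    refine ⟨hle, ?_⟩
    obtain ⟨hw1, hw2⟩ := hw e he
    have hP : ∃ i, w e ≤ (2 : ℤ) ^ (i * m) := by
      refine ⟨L / m, ?_⟩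
      rw [Nat.div_mul_cancel hdvd]
      exact hw2
    have hile : Nat.find hP ≤ L / m := by
      apply Nat.find_min' hP
      rw [Nat.div_mul_cancel hdvd]; exact hw2
    have hmem : ((2 : ℤ) ^ (Nat.find hP * m)) ∈
        (Finset.range (L / m + 1)).image (fun i => (2 : ℤ) ^ (i * m)) :=
      Finset.mem_image.2 ⟨Nat.find hP,
        Finset.mem_range.2 (Nat.lt_succ_of_le hile), rfl⟩
    have hwe : w' e ≤ (2 : ℤ) ^ (Nat.find hP * m) :=
      hmn _ hmem (Nat.find_spec hP)
    rcases Nat.eq_zero_or_pos (Nat.find hP) with h0 | hpos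
    · rw [h0] at hwe
      simp only [Nat.zero_mul, pow_zero, Nat.cast_one] at hwe
      have h2m : (1 : ℤ) ≤ 2 ^ m := by exact_mod_cast Nat.one_le_two_pow
      nlinarith
    · obtain ⟨j, hj⟩ : ∃ j, Nat.find hP = j + 1 :=
        ⟨Nat.find hP - 1, (Nat.succ_pred_eq_of_pos hpos).symm⟩
      have hjlt : ¬ (w e ≤ (2 : ℤ) ^ (j * m)) :=
        Nat.find_min hP (by omega)
      push_neg at hjlt
      rw [hj] at hwe
      calc w' e ≤ (2 : ℤ) ^ ((j + 1) * m) := hwe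
        _ = 2 ^ m * (2 : ℤ) ^ (j * m) := by
            rw [add_mul, one_mul, pow_add]
            ring
        _ ≤ 2 ^ m * w e :=
            mul_le_mul_of_nonneg_left hjlt.le (by positivity)
  have hsub' : T'.edgeSet ⊆ G.edgeSet := SimpleGraph.edgeSet_mono hT'G
  have hsub : T.edgeSet ⊆ G.edgeSet := SimpleGraph.edgeSet_mono hTG
  have hfin : ∀ (S : SimpleGraph V) (f : Sym2 V → ℤ),
      treeWeight S f = ∑ e ∈ S.edgeSet.toFinset, f e := by
    intro S f
    unfold treeWeight
    congr!
  have h1 : treeWeight T' w ≤ treeWeight T' w' := by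
    rw [hfin, hfin]
    refine Finset.sum_le_sum ?_
    intro e hee
    exact (key e (hsub' (Set.mem_toFinset.1 hee))).1
  have h2 : treeWeight T w' ≤ 2 ^ m * treeWeight T w := by
    rw [hfin, hfin]
    rw [Finset.mul_sum]
    refine Finset.sum_le_sum ?_
    intro e hee
    exact (key e (hsub (Set.mem_toFinset.1 hee))).2
  calc treeWeight T' w ≤ treeWeight T' w' := h1
    _ ≤ treeWeight T w' := hmin' T hTG hT
    _ ≤ 2 ^ m * treeWeight T w := h2
end

section
/- Let V be a finite set, p : V → Option V a partial parent-pointer function, and c : V → ℕ a function satisfying, for every v ∈ V, c(v) = 1 + Σ_{u ∈ V, p(u) = some v} c(u). Then the parent-pointer relation has no cycle: there is no vertex v and integer t ≥ 1 such that following p from v for t steps (all steps defined) returns to v. (This is the certification of acyclicity by storing at each node the number of its descendants.) -/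
/-- **Certifying acyclicity by descendant counts.** Let `V` be a finite set,
`p : V → Option V` a partial parent-pointer function, and `c : V → ℕ` a function
satisfying, for every `v`, `c v = 1 + Σ_{u : p u = some v} c u`. Then the parent-pointer
relation has no cycle: there is no vertex `v` and integer `t ≥ 1` such that following `p`
from `v` for `t` steps (all steps defined) returns to `v`. Following `p` for `t` steps
starting from `v` is expressed by iterating `fun o => o.bind p` on `some v`: the result
is `some x` exactly when all `t` steps are defined and land at `x`. -/
theorem descendant_counts_certify_acyclicity {V : Type*} [Fintype V] [DecidableEq V]
    (p : V → Option V) (c : V → ℕ)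
    (hc : ∀ v : V, c v = 1 + ∑ u ∈ Finset.univ.filter (fun u => p u = some v), c u) :
    ∀ v : V, ∀ t : ℕ, 1 ≤ t → (fun o : Option V => o.bind p)^[t] (some v) ≠ some v := by
  have hstep : ∀ u v : V, p u = some v → c u < c v := by
    intro u v huv
    have hmem : u ∈ Finset.univ.filter (fun u => p u = some v) := by
      simp [huv]
    have hle : c u ≤ ∑ w ∈ Finset.univ.filter (fun u => p u = some v), c w :=
      Finset.single_le_sum (fun _ _ => Nat.zero_le _) hmem
    have := hc v
    omega
  have key : ∀ (t : ℕ) (v x : V),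
      (fun o : Option V => o.bind p)^[t] (some v) = some x → c v + t ≤ c x := by
    intro t
    induction t with
    | zero => intro v x h; simp at h; subst h; omega
    | succ t ih =>
      intro v x h
      rw [Function.iterate_succ_apply'] at h
      cases hy : (fun o : Option V => o.bind p)^[t] (some v) with
      | none => rw [hy] at h; simp at h
      | some y =>
        rw [hy] at h
        simp only [Option.bind_some] at h
        have h1 := ih v y hy
        have h2 := hstep y x h
        omega
  intro v t ht h
  have := key t v v h
  omega
end
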